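/- Let n ≥ 3, k ∈ ℕ, τ > 0, t₀ ∈ ℝ, and let φ : ℝ → ℝ be smooth on (−∞, t₀). For g ∈ C_c^∞((−∞, t₀)) define Lg = (d/dt + τφ'(t) + k + n − 2)((d/dt + τφ'(t) − k) g). Then for every t < t₀, g(t) = −∫_t^∞ ∫_{−∞}^y e^{k(t−y) − τ(φ(t) − φ(y))} e^{−(k+n−2)(y−s) − τ(φ(y) − φ(s))} (Lg)(s) ds dy, and also g(t) = ∫_{−∞}^t ∫_{−∞}^y e^{k(t−y) − τ(φ(t) − φ(y))} e^{−(k+n−2)(y−s) − τ(φ(y) − φ(s))} (Lg)(s) ds dy. -/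

import Mathlib

open Real MeasureTheory Set

noncomputable section

/-- The conjugated factored operator
`L g = (d/dt + τφ'(t) + k + n - 2)((d/dt + τφ'(t) - k) g)`. -/
noncomputable def Lop (τ : ℝ) (k n : ℕ) (φ : ℝ → ℝ) (g : ℝ → ℂ) : ℝ → ℂ :=
  fun s =>
    deriv (fun w => deriv g w + ((τ * deriv φ w - (k : ℝ) : ℝ) : ℂ) * g w) s
      + ((τ * deriv φ s + (k : ℝ) + (n : ℝ) - 2 : ℝ) : ℂ)
        * (deriv g s + ((τ * deriv φ s - (k : ℝ) : ℝ) : ℂ) * g s)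

open scoped ContDiff

private lemma tendsto_zero_atBot_of_hcs {F : ℝ → ℂ} (h : HasCompactSupport F) :
    Filter.Tendsto F Filter.atBot (nhds 0) := by
  obtain ⟨c, hc⟩ := h.isCompact.bddBelow
  refine Filter.Tendsto.congr' ?_ tendsto_const_nhds
  filter_upwards [Filter.eventually_lt_atBot c] with x hx
  have hxs : x ∉ tsupport F := fun hmem => absurd (hc hmem) (not_le.2 hx)
  exact (image_eq_zero_of_notMem_tsupport hxs).symm

private lemma tendsto_zero_atTop_of_hcs {F : ℝ → ℂ} (h : HasCompactSupport F) :
    Filter.Tendsto F Filter.atTop (nhds 0) := by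
  obtain ⟨c, hc⟩ := h.isCompact.bddAbove
  refine Filter.Tendsto.congr' ?_ tendsto_const_nhds
  filter_upwards [Filter.eventually_gt_atTop c] with x hx
  have hxs : x ∉ tsupport F := fun hmem => absurd (hc hmem) (not_le.2 hx)
  exact (image_eq_zero_of_notMem_tsupport hxs).symm

/-- the one-dimensional solution formulas inverting the conjugated factored
operator `L = (d/dt + τφ' + k + n - 2)(d/dt + τφ' - k)` for `g ∈ C_c^∞((-∞, t₀))`. -/
theorem statement16 (n : ℕ) (hn : 3 ≤ n) (k : ℕ) (τ : ℝ) (hτ : 0 < τ) (t₀ : ℝ)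
    (φ : ℝ → ℝ) (hφ : ContDiffOn ℝ (⊤ : ℕ∞) φ (Set.Iio t₀))
    (g : ℝ → ℂ) (hg : ContDiff ℝ (⊤ : ℕ∞) g) (hgc : HasCompactSupport g)
    (hgsupp : tsupport g ⊆ Set.Iio t₀) :
    ∀ t : ℝ, t < t₀ →
      (g t = -∫ y in Set.Ioi t, ∫ s in Set.Iic y,
          ((Real.exp ((k : ℝ) * (t - y) - τ * (φ t - φ y))
            * Real.exp (-((k : ℝ) + (n : ℝ) - 2) * (y - s) - τ * (φ y - φ s)) : ℝ) : ℂ)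
          * Lop τ k n φ g s)
      ∧ (g t = ∫ y in Set.Iio t, ∫ s in Set.Iic y,
          ((Real.exp ((k : ℝ) * (t - y) - τ * (φ t - φ y))
            * Real.exp (-((k : ℝ) + (n : ℝ) - 2) * (y - s) - τ * (φ y - φ s)) : ℝ) : ℂ)
          * Lop τ k n φ g s) := by
  -- a bound for the support, strictly below t₀
  obtain ⟨T, hTlt, hsupT⟩ : ∃ T, T < t₀ ∧ tsupport g ⊆ Set.Iic T := by
    rcases (tsupport g).eq_empty_or_nonempty with hK | hK
    · exact ⟨t₀ - 1, by linarith, by rw [hK]; exact empty_subset _⟩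
    · obtain ⟨a, haK, ha⟩ := hgc.isCompact.exists_isGreatest hK
      exact ⟨a, hgsupp haK, fun x hx => ha hx⟩
  have h1inf : (1 : WithTop ℕ∞) ≤ ∞ := by decide
  have hinfadd : (∞ : WithTop ℕ∞) + 1 ≤ ∞ := le_of_eq rfl
  have hphiS : ContDiffOn ℝ ∞ φ (Set.Iio t₀) := hφ.of_le (by simp)
  have hgS : ContDiff ℝ ∞ g := hg.of_le (by simp)
  have hgd : ContDiff ℝ ∞ (deriv g) := (contDiff_infty_iff_deriv.mp hgS).2
  have hφd' : ContDiffOn ℝ ∞ (deriv φ) (Set.Iio t₀) := hphiS.deriv_of_isOpen isOpen_Iio hinfadd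
  -- the first-order factor
  set u : ℝ → ℂ := fun w => deriv g w + ((τ * deriv φ w - (k : ℝ) : ℝ) : ℂ) * g w with hu_def
  have hLop : ∀ s, Lop τ k n φ g s
      = deriv u s + ((τ * deriv φ s + (k : ℝ) + (n : ℝ) - 2 : ℝ) : ℂ) * u s := by
    intro s; rw [hu_def]; rfl
  have hucd : ContDiffOn ℝ ∞ u (Set.Iio t₀) := by
    rw [hu_def]
    exact ContDiffOn.add hgd.contDiffOn
      (ContDiffOn.mul
        (Complex.ofRealCLM.contDiff.comp_contDiffOn
          ((contDiffOn_const.mul hφd').sub contDiffOn_const))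
        hgS.contDiffOn)
  have hducont : ContinuousOn (deriv u) (Set.Iio t₀) :=
    hucd.continuousOn_deriv_of_isOpen isOpen_Iio h1inf
  -- vanishing off the support
  have hgz : ∀ ⦃x⦄, x ∉ tsupport g → g =ᶠ[nhds x] 0 := by
    intro x hx
    filter_upwards [(isClosed_tsupport g).isOpen_compl.mem_nhds hx] with w hw
    exact image_eq_zero_of_notMem_tsupport hw
  have huz : ∀ ⦃x⦄, x ∉ tsupport g → u x = 0 := by
    intro x hx
    have h0 : deriv g x = 0 := by
      rw [(hgz hx).deriv_eq]; exact deriv_const x 0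
    simp [hu_def, h0, (hgz hx).self_of_nhds]
  have huz' : ∀ ⦃x⦄, x ∉ tsupport g → u =ᶠ[nhds x] 0 := by
    intro x hx
    filter_upwards [(isClosed_tsupport g).isOpen_compl.mem_nhds hx] with w hw
    exact huz hw
  have hLz : ∀ ⦃x⦄, x ∉ tsupport g → Lop τ k n φ g x = 0 := by
    intro x hx
    have hzero : deriv (0 : ℝ → ℂ) x = 0 := deriv_const x 0
    rw [hLop, (huz' hx).deriv_eq, hzero, huz hx]
    simp
  have hnmem : ∀ ⦃x⦄, T < x → x ∉ tsupport g := fun x hx hmem => absurd (hsupT hmem) (not_le.2 hx)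
  -- the two auxiliary functions and their derivatives
  set V : ℝ → ℂ := fun x =>
    ((Real.exp (((k : ℝ) + (n : ℝ) - 2) * x + τ * φ x) : ℝ) : ℂ) * u x with hV_def
  set D : ℝ → ℂ := fun x =>
    ((Real.exp (((k : ℝ) + (n : ℝ) - 2) * x + τ * φ x) : ℝ) : ℂ)
      * (deriv u x + ((τ * deriv φ x + (k : ℝ) + (n : ℝ) - 2 : ℝ) : ℂ) * u x) with hD_def
  set W : ℝ → ℂ := fun x =>
    ((Real.exp (-(k : ℝ) * x + τ * φ x) : ℝ) : ℂ) * g x with hW_def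
  set E : ℝ → ℂ := fun x =>
    ((Real.exp (-(k : ℝ) * x + τ * φ x) : ℝ) : ℂ) * u x with hE_def
  have hDz : ∀ ⦃x⦄, x ∉ tsupport g → D x = 0 := by
    intro x hx
    have h0 : deriv u x = 0 := by rw [(huz' hx).deriv_eq]; exact deriv_const x 0
    simp [hD_def, h0, huz hx]
  have hVz : ∀ ⦃x⦄, x ∉ tsupport g → V x = 0 := fun x hx => by simp [hV_def, huz hx]
  have hWz : ∀ ⦃x⦄, x ∉ tsupport g → W x = 0 := fun x hx => by
    simp [hW_def, image_eq_zero_of_notMem_tsupport hx]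
  have hEz : ∀ ⦃x⦄, x ∉ tsupport g → E x = 0 := fun x hx => by simp [hE_def, huz hx]
  -- derivative of V is D
  have hVderiv : ∀ x, HasDerivAt V (D x) x := by
    intro x
    rcases lt_or_ge x t₀ with hx | hx
    · have hS : Set.Iio t₀ ∈ nhds x := Iio_mem_nhds hx
      have hφx : HasDerivAt φ (deriv φ x) x :=
        ((hφ.contDiffAt hS).differentiableAt (by simp)).hasDerivAt
      have h1 : HasDerivAt (fun w => ((k : ℝ) + (n : ℝ) - 2) * w + τ * φ w)
          (((k : ℝ) + (n : ℝ) - 2) + τ * deriv φ x) x := by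
        have h := ((hasDerivAt_id x).const_mul ((k : ℝ) + (n : ℝ) - 2)).add (hφx.const_mul τ); simp only [mul_one] at h; exact h
      have h2 := (h1.exp).ofReal_comp
      have hu' : HasDerivAt u (deriv u x) x :=
        ((hucd.contDiffAt hS).differentiableAt (by simp)).hasDerivAt
      have h3 := h2.mul hu'
      rw [hV_def]
      refine h3.congr_deriv ?_
      rw [hD_def]
      push_cast
      ring
    · have hxT : T < x := hTlt.trans_le hx
      have hVef : V =ᶠ[nhds x] (fun _ => (0 : ℂ)) := by
        filter_upwards [isOpen_Ioi.mem_nhds hxT] with w hw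
        exact hVz (hnmem hw)
      rw [hDz (hnmem hxT)]
      exact (hasDerivAt_const x (0 : ℂ)).congr_of_eventuallyEq hVef
  -- derivative of W is E
  have hWderiv : ∀ x, HasDerivAt W (E x) x := by
    intro x
    rcases lt_or_ge x t₀ with hx | hx
    · have hS : Set.Iio t₀ ∈ nhds x := Iio_mem_nhds hx
      have hφx : HasDerivAt φ (deriv φ x) x :=
        ((hφ.contDiffAt hS).differentiableAt (by simp)).hasDerivAt
      have h1 : HasDerivAt (fun w => -(k : ℝ) * w + τ * φ w)
          (-(k : ℝ) + τ * deriv φ x) x := by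
        have h := ((hasDerivAt_id x).const_mul (-(k : ℝ))).add (hφx.const_mul τ); simp only [mul_one] at h; exact h
      have h2 := (h1.exp).ofReal_comp
      have hg' : HasDerivAt g (deriv g x) x := (hg.differentiable (by simp) x).hasDerivAt
      have h3 := h2.mul hg'
      rw [hW_def]
      refine h3.congr_deriv ?_
      rw [hE_def, hu_def]
      push_cast
      ring
    · have hxT : T < x := hTlt.trans_le hx
      have hWef : W =ᶠ[nhds x] (fun _ => (0 : ℂ)) := by
        filter_upwards [isOpen_Ioi.mem_nhds hxT] with w hw
        exact hWz (hnmem hw)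
      rw [hEz (hnmem hxT)]
      exact (hasDerivAt_const x (0 : ℂ)).congr_of_eventuallyEq hWef
  -- continuity of D and E
  have hDcont : Continuous D := by
    rw [continuous_iff_continuousAt]
    intro x
    rcases lt_or_ge x t₀ with hx | hx
    · have hS : Set.Iio t₀ ∈ nhds x := Iio_mem_nhds hx
      have hφc : ContinuousAt φ x := (hφ.contDiffAt hS).continuousAt
      have hφ'c : ContinuousAt (deriv φ) x := (hφd'.contDiffAt hS).continuousAt
      have huc : ContinuousAt u x := (hucd.contDiffAt hS).continuousAt
      have hduc : ContinuousAt (deriv u) x := hducont.continuousAt hS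
      rw [hD_def]
      exact (Complex.continuous_ofReal.continuousAt.comp
          (Real.continuous_exp.continuousAt.comp
            ((continuousAt_id.const_mul _).add (hφc.const_mul τ)))).mul
        (hduc.add ((Complex.continuous_ofReal.continuousAt.comp
          ((((hφ'c.const_mul τ).add continuousAt_const).add continuousAt_const).sub
            continuousAt_const)).mul huc))
    · have hxT : T < x := hTlt.trans_le hx
      have hDef : D =ᶠ[nhds x] (fun _ => (0 : ℂ)) := by
        filter_upwards [isOpen_Ioi.mem_nhds hxT] with w hw
        exact hDz (hnmem hw)
      exact continuousAt_const.congr hDef.symm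
  have hEcont : Continuous E := by
    rw [continuous_iff_continuousAt]
    intro x
    rcases lt_or_ge x t₀ with hx | hx
    · have hS : Set.Iio t₀ ∈ nhds x := Iio_mem_nhds hx
      have hφc : ContinuousAt φ x := (hφ.contDiffAt hS).continuousAt
      have huc : ContinuousAt u x := (hucd.contDiffAt hS).continuousAt
      rw [hE_def]
      exact (Complex.continuous_ofReal.continuousAt.comp
          (Real.continuous_exp.continuousAt.comp
            ((continuousAt_id.const_mul _).add (hφc.const_mul τ)))).mul huc
    · have hxT : T < x := hTlt.trans_le hx
      have hEef : E =ᶠ[nhds x] (fun _ => (0 : ℂ)) := by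
        filter_upwards [isOpen_Ioi.mem_nhds hxT] with w hw
        exact hEz (hnmem hw)
      exact continuousAt_const.congr hEef.symm
  -- compact supports and integrability
  have hDsupp : HasCompactSupport D := HasCompactSupport.intro hgc fun x hx => hDz hx
  have hEsupp : HasCompactSupport E := HasCompactSupport.intro hgc fun x hx => hEz hx
  have hVsupp : HasCompactSupport V := HasCompactSupport.intro hgc fun x hx => hVz hx
  have hWsupp : HasCompactSupport W := HasCompactSupport.intro hgc fun x hx => hWz hx
  have hDint : Integrable D := hDcont.integrable_of_hasCompactSupport hDsupp
  have hEint : Integrable E := hEcont.integrable_of_hasCompactSupport hEsupp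
  -- FTC identities
  have hVFTC : ∀ y, (∫ s in Set.Iic y, D s) = V y := by
    intro y
    simpa using integral_Iic_of_hasDerivAt_of_tendsto' (fun x _ => hVderiv x)
      hDint.integrableOn (tendsto_zero_atBot_of_hcs hVsupp)
  -- main computation
  intro t ht
  set A : ℝ := Real.exp ((k : ℝ) * t - τ * φ t) with hA_def
  have hVy : ∀ y : ℝ, (∫ s in Set.Iic y,
      ((Real.exp ((k : ℝ) * (t - y) - τ * (φ t - φ y))
        * Real.exp (-((k : ℝ) + (n : ℝ) - 2) * (y - s) - τ * (φ y - φ s)) : ℝ) : ℂ)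
      * Lop τ k n φ g s) = (A : ℂ) * E y := by
    intro y
    have key1 : ∀ s : ℝ, ((Real.exp ((k : ℝ) * (t - y) - τ * (φ t - φ y))
        * Real.exp (-((k : ℝ) + (n : ℝ) - 2) * (y - s) - τ * (φ y - φ s)) : ℝ) : ℂ)
        * Lop τ k n φ g s
        = ((A * Real.exp (-(2 * (k : ℝ) + (n : ℝ) - 2) * y) : ℝ) : ℂ) * D s := by
      intro s
      have hexp : Real.exp ((k : ℝ) * (t - y) - τ * (φ t - φ y))
          * Real.exp (-((k : ℝ) + (n : ℝ) - 2) * (y - s) - τ * (φ y - φ s))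
          = (A * Real.exp (-(2 * (k : ℝ) + (n : ℝ) - 2) * y))
            * Real.exp (((k : ℝ) + (n : ℝ) - 2) * s + τ * φ s) := by
        rw [hA_def, ← Real.exp_add, ← Real.exp_add, ← Real.exp_add]
        congr 1
        ring
      rw [hexp, hD_def, hLop]
      push_cast
      ring
    calc (∫ s in Set.Iic y,
          ((Real.exp ((k : ℝ) * (t - y) - τ * (φ t - φ y))
            * Real.exp (-((k : ℝ) + (n : ℝ) - 2) * (y - s) - τ * (φ y - φ s)) : ℝ) : ℂ)
          * Lop τ k n φ g s)
        = ∫ s in Set.Iic y,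
            ((A * Real.exp (-(2 * (k : ℝ) + (n : ℝ) - 2) * y) : ℝ) : ℂ) * D s :=
          integral_congr_ae (Filter.Eventually.of_forall key1)
      _ = ((A * Real.exp (-(2 * (k : ℝ) + (n : ℝ) - 2) * y) : ℝ) : ℂ)
            * ∫ s in Set.Iic y, D s := integral_const_mul _ _
      _ = (A : ℂ) * E y := by
          rw [hVFTC y, hV_def, hE_def]
          simp only
          rw [show Real.exp (-(k : ℝ) * y + τ * φ y)
              = Real.exp (-(2 * (k : ℝ) + (n : ℝ) - 2) * y)
                * Real.exp (((k : ℝ) + (n : ℝ) - 2) * y + τ * φ y) by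
            rw [← Real.exp_add]; congr 1; ring]
          push_cast
          ring
  have hcancel : (A : ℂ) * ((Real.exp (-(k : ℝ) * t + τ * φ t) : ℝ) : ℂ) = 1 := by
    rw [← Complex.ofReal_mul, hA_def, ← Real.exp_add,
      show ((k : ℝ) * t - τ * φ t) + (-(k : ℝ) * t + τ * φ t) = 0 by ring,
      Real.exp_zero, Complex.ofReal_one]
  constructor
  · have hIoi : (∫ y in Set.Ioi t, E y) = 0 - W t :=
      integral_Ioi_of_hasDerivAt_of_tendsto' (fun x _ => hWderiv x)
        hEint.integrableOn (tendsto_zero_atTop_of_hcs hWsupp)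
    rw [integral_congr_ae (Filter.Eventually.of_forall hVy), integral_const_mul, hIoi,
      zero_sub, hW_def]
    simp only
    rw [mul_neg, neg_neg, ← mul_assoc, hcancel, one_mul]
  · have hIic : (∫ y in Set.Iic t, E y) = W t - 0 :=
      integral_Iic_of_hasDerivAt_of_tendsto' (fun x _ => hWderiv x)
        hEint.integrableOn (tendsto_zero_atBot_of_hcs hWsupp)
    rw [integral_congr_ae (Filter.Eventually.of_forall hVy), integral_const_mul,
      ← integral_Iic_eq_integral_Iio, hIic, sub_zero, hW_def]
    simp only
    rw [← mul_assoc, hcancel, one_mul]
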